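/- For every n ≥ 0 and all functions u, v : V_n → ℝ, the discrete integration-by-parts formula with boundary terms holds: ⟨u, Δ_n^D v⟩_n + Σ_{i=0,1,2} u(a_i)·∂_n^i v = ⟨v, Δ_n^D u⟩_n + Σ_{i=0,1,2} v(a_i)·∂_n^i u. -/

import Mathlib

open scoped Classical
open Real Set

noncomputable section

abbrev Pt : Type := ℝ × ℝ

/-- The three corners of the unit triangle. -/
def sierA : Fin 3 → Pt
  | 0 => (0, 0)
  | 1 => (1 / 2, Real.sqrt 3 / 2)
  | 2 => (1, 0)

/-- The three contractions `φᵢ(x) = (x + aᵢ)/2`. -/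
def ctr (i : Fin 3) (x : Pt) : Pt :=
  ((x.1 + (sierA i).1) / 2, (x.2 + (sierA i).2) / 2)

/-- The vertex sets `V n`. -/
def V : ℕ → Finset Pt
  | 0 => {sierA 0, sierA 1, sierA 2}
  | n + 1 => (V n).image (ctr 0) ∪ (V n).image (ctr 1) ∪ (V n).image (ctr 2)

/-- The (ordered) edge sets: `(x, y) ∈ Ed n` iff `{x,y} ∈ E_n`; each undirected
edge appears with both orientations. -/
def Ed : ℕ → Finset (Pt × Pt)
  | 0 => (V 0 ×ˢ V 0).filter fun p => p.1 ≠ p.2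
  | n + 1 => Finset.univ.biUnion fun i : Fin 3 => (Ed n).image fun p => (ctr i p.1, ctr i p.2)

/-- `V* = ⋃ n, V n`. -/
def Vstar : Set Pt := ⋃ n, (V n : Set Pt)

/-- The level-`n` energy `E_n(u,u) = (5/3)^n Σ_{{x,y} ∈ E_n} (u y - u x)²`
(each undirected edge counted once, whence the division by 2). -/
def En (n : ℕ) (u : Pt → ℝ) : ℝ :=
  (5 / 3 : ℝ) ^ n * (∑ p ∈ Ed n, (u p.2 - u p.1) ^ 2) / 2

/-- The discrete Laplacian `Δ_n u (x) = 5^n Σ_{y ∼ₙ x} (u y - u x)`. -/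
def lap (n : ℕ) (u : Pt → ℝ) (x : Pt) : ℝ :=
  (5 : ℝ) ^ n * ∑ p ∈ (Ed n).filter (fun p => p.1 = x), (u p.2 - u p.1)

/-- The discrete Dirichlet Laplacian: `Δ_n^D u = Δ_n u` off the boundary
`V₀ = {a₀,a₁,a₂}`, and `0` on the boundary. -/
def lapD (n : ℕ) (u : Pt → ℝ) (x : Pt) : ℝ :=
  if x ∈ (V 0 : Set Pt) then 0 else lap n u x

/-- The normal derivative `∂_n^i u = (5/3)^n Σ_{y ∼ₙ aᵢ} (u y − u aᵢ)`. -/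
def nder (n : ℕ) (i : Fin 3) (u : Pt → ℝ) : ℝ :=
  (5 / 3 : ℝ) ^ n * ∑ p ∈ (Ed n).filter (fun p => p.1 = sierA i), (u p.2 - u p.1)

/-! Both sides equal `(5/3)^n Σ_{(x,y) ∈ E_n} u(x) (v(y) - v(x))`: at an interior vertex `x` the
Dirichlet Laplacian supplies the sum over the edges at `x` with weight `5^n / 3^n`, at a corner the
normal derivative supplies it with weight `(5/3)^n`, the same. This edge sum is symmetric in `u`
and `v` because `E_n` is closed under reversing edges. -/

lemma sierA_injective : Function.Injective sierA := by
  intro i j hij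
  fin_cases i <;> fin_cases j <;> simp_all [sierA, Prod.ext_iff]

lemma ctr_sierA_self (i : Fin 3) : ctr i (sierA i) = sierA i := by
  ext <;> simp only [ctr] <;> ring

lemma mem_V_succ_of_mem_image {n : ℕ} {x : Pt} {i : Fin 3} (hx : x ∈ (V n).image (ctr i)) :
    x ∈ V (n + 1) := by
  simp only [V, Finset.mem_union]
  fin_cases i <;> tauto

lemma sierA_mem_V (i : Fin 3) (n : ℕ) : sierA i ∈ V n := by
  induction n with
  | zero => fin_cases i <;> simp [V]
  | succ n ih => exact mem_V_succ_of_mem_image (Finset.mem_image.2 ⟨_, ih, ctr_sierA_self i⟩)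

lemma V_zero_eq_image_sierA : V 0 = Finset.univ.image sierA := by
  ext x
  simp only [V, Finset.mem_insert, Finset.mem_singleton, Finset.mem_image, Finset.mem_univ,
    true_and, Fin.exists_fin_succ, Fin.exists_fin_zero]
  grind

lemma V_zero_subset (n : ℕ) : V 0 ⊆ V n := by
  rw [V_zero_eq_image_sierA]
  simpa [Finset.image_subset_iff] using fun i => sierA_mem_V i n

lemma fst_mem_V_of_mem_Ed {n : ℕ} {p : Pt × Pt} (hp : p ∈ Ed n) : p.1 ∈ V n := by
  induction n generalizing p with
  | zero => exact (Finset.mem_product.1 (Finset.mem_filter.1 hp).1).1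
  | succ n ih =>
    simp only [Ed, Finset.mem_biUnion, Finset.mem_image, Finset.mem_univ, true_and] at hp
    obtain ⟨i, q, hq, rfl⟩ := hp
    exact mem_V_succ_of_mem_image (Finset.mem_image_of_mem _ (ih hq))

lemma swap_mem_Ed {n : ℕ} {p : Pt × Pt} (hp : p ∈ Ed n) : p.swap ∈ Ed n := by
  induction n generalizing p with
  | zero =>
    simp only [Ed, Finset.mem_filter, Finset.mem_product] at hp ⊢
    exact ⟨hp.1.symm, fun h => hp.2 h.symm⟩
  | succ n ih =>
    simp only [Ed, Finset.mem_biUnion, Finset.mem_image, Finset.mem_univ, true_and] at hp ⊢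
    obtain ⟨i, q, hq, rfl⟩ := hp
    exact ⟨i, q.swap, ih hq, rfl⟩

lemma Finset.sum_comp_swap_of_swap_mem {α M : Type*} [AddCommMonoid M] {s : Finset (α × α)}
    (hs : ∀ p ∈ s, p.swap ∈ s) (f : α × α → M) : ∑ p ∈ s, f p.swap = ∑ p ∈ s, f p :=
  Finset.sum_nbij' Prod.swap Prod.swap hs hs (fun _ _ => rfl) (fun _ _ => rfl) (fun _ _ => rfl)

lemma Finset.sum_mul_sum_filter_fst_eq {α β R : Type*} [DecidableEq α]
    [NonUnitalNonAssocSemiring R] {s : Finset (α × β)} {t : Finset α} (hst : ∀ p ∈ s, p.1 ∈ t)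
    (u : α → R) (f : α × β → R) :
    ∑ x ∈ t, u x * ∑ p ∈ s with p.1 = x, f p = ∑ p ∈ s, u p.1 * f p := by
  rw [← Finset.sum_fiberwise_of_maps_to hst]
  refine Finset.sum_congr rfl fun x _ => ?_
  rw [Finset.mul_sum]
  exact Finset.sum_congr rfl fun p hp => by rw [(Finset.mem_filter.1 hp).2]

def flux (n : ℕ) (v : Pt → ℝ) (x : Pt) : ℝ :=
  ∑ p ∈ (Ed n).filter (fun p => p.1 = x), (v p.2 - v p.1)

lemma sum_mul_flux (n : ℕ) (u v : Pt → ℝ) :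
    ∑ x ∈ V n, u x * flux n v x = ∑ p ∈ Ed n, u p.1 * (v p.2 - v p.1) :=
  Finset.sum_mul_sum_filter_fst_eq (fun _ => fst_mem_V_of_mem_Ed) u _

lemma sum_mul_lapD (n : ℕ) (u v : Pt → ℝ) :
    ∑ x ∈ V n, u x * lapD n v x = 5 ^ n * ∑ x ∈ V n \ V 0, u x * flux n v x := by
  rw [← Finset.filter_notMem_eq_sdiff, Finset.sum_filter, Finset.mul_sum]
  refine Finset.sum_congr rfl fun x _ => ?_
  by_cases hx : x ∈ V 0 <;> simp [lapD, lap, flux, hx, mul_left_comm]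

lemma sum_mul_nder (n : ℕ) (u v : Pt → ℝ) :
    ∑ i : Fin 3, u (sierA i) * nder n i v = (5 / 3) ^ n * ∑ x ∈ V 0, u x * flux n v x := by
  rw [V_zero_eq_image_sierA, Finset.sum_image fun i _ j _ h => sierA_injective h, Finset.mul_sum]
  exact Finset.sum_congr rfl fun i _ => by rw [nder, flux]; ring

lemma sum_mul_lapD_add_sum_mul_nder (n : ℕ) (u v : Pt → ℝ) :
    (∑ x ∈ V n, u x * lapD n v x) / 3 ^ n + ∑ i : Fin 3, u (sierA i) * nder n i v
      = (5 / 3) ^ n * ∑ p ∈ Ed n, u p.1 * (v p.2 - v p.1) := by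
  rw [sum_mul_lapD, sum_mul_nder, ← sum_mul_flux, ← Finset.sum_sdiff (V_zero_subset n), div_pow]
  ring

lemma sum_Ed_mul_sub_comm (n : ℕ) (u v : Pt → ℝ) :
    ∑ p ∈ Ed n, u p.1 * (v p.2 - v p.1) = ∑ p ∈ Ed n, v p.1 * (u p.2 - u p.1) := by
  have hswap := Finset.sum_comp_swap_of_swap_mem (fun _ => swap_mem_Ed (n := n))
    (fun p => u p.1 * v p.2)
  simp only [Prod.fst_swap, Prod.snd_swap] at hswap
  simp only [mul_sub, Finset.sum_sub_distrib, ← hswap, mul_comm]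

/-- Discrete integration by parts with boundary terms:
`⟨u, Δ_n^D v⟩_n + Σᵢ u(aᵢ) ∂_n^i v = ⟨v, Δ_n^D u⟩_n + Σᵢ v(aᵢ) ∂_n^i u`. -/
theorem integration_by_parts_boundary (n : ℕ) (u v : Pt → ℝ) :
    (∑ x ∈ V n, u x * lapD n v x) / 3 ^ n
        + ∑ i : Fin 3, u (sierA i) * nder n i v
      = (∑ x ∈ V n, v x * lapD n u x) / 3 ^ n
        + ∑ i : Fin 3, v (sierA i) * nder n i u := by
  rw [sum_mul_lapD_add_sum_mul_nder, sum_mul_lapD_add_sum_mul_nder, sum_Ed_mul_sub_comm]
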